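/- arXiv:0709.1209 — 2 statements merged into one kernel-verified Lean document; each statement's English description precedes it below -/
import Mathlib

section
/- Let M be a maximal subgroup of a finite group G such that G is p-solvable for a prime p dividing |G:M|, and let K/L be a chief factor of G. Then exactly one of the following holds: (1) M covers K/L; or (2) M avoids K/L, K/L is abelian, and K/L is isomorphic to X_M as G-modules (G acting by conjugation). Moreover, in any chief series of G, M avoids exactly one factor and covers all other factors. -/
open scoped Pointwise

/-- A finite group `G` is `p`-solvable: it has a normal series whose factors are
`p`-groups or `p'`-groups. -/
def IsPSolvable (p : ℕ) (G : Type*) [Group G] : Prop :=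
  ∃ (n : ℕ) (s : Fin (n + 1) → Subgroup G),
    s 0 = ⊥ ∧ s (Fin.last n) = ⊤ ∧
    (∀ i : Fin n, s i.castSucc ≤ s i.succ) ∧
    (∀ i : Fin n, ((s i.castSucc).subgroupOf (s i.succ)).Normal) ∧
    (∀ i : Fin n, (∃ k, (s i.castSucc).relIndex (s i.succ) = p ^ k) ∨
      ¬ p ∣ (s i.castSucc).relIndex (s i.succ))

/-- `X` is a minimal normal subgroup. -/
def IsMinNormal {G : Type*} [Group G] (X : Subgroup G) : Prop :=
  X ≠ ⊥ ∧ X.Normal ∧ ∀ Y : Subgroup G, Y.Normal → Y ≤ X → Y = ⊥ ∨ Y = X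

/-- `X ≤ G/A` and `Y ≤ G/B` are isomorphic as `G`-modules (`G` acting by
conjugation through the respective quotients). -/
def ConjIso {G : Type*} [Group G] {A B : Subgroup G} [A.Normal] [B.Normal]
    (X : Subgroup (G ⧸ A)) (Y : Subgroup (G ⧸ B)) : Prop :=
  ∃ e : X ≃* Y, ∀ (g : G) (x x' : X),
    (x' : G ⧸ A) = QuotientGroup.mk g * (x : G ⧸ A) * (QuotientGroup.mk g)⁻¹ →
    ((e x' : Y) : G ⧸ B) = QuotientGroup.mk g * ((e x : Y) : G ⧸ B) * (QuotientGroup.mk g)⁻¹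

/-!
If `M` does not cover the chief factor `K/L`, then `L ≤ M` and `KM = G`, so `|G : M| = |K : M ∩ K|`
divides `|K/L|`, and `p` divides `|K/L|`. The first term of a `p`-solvable series that meets `K`
outside `L` gives a nontrivial subnormal subgroup of `K/L` whose exponent divides the order `d` of
one factor of the series, a power of `p` or prime to `p`. Let `π` be the set of primes dividing `d`.
The largest `π`-subgroup normalized by a subnormal subgroup lies in the largest normal `π`-subgroup
of the whole group, so by minimality `K/L` is a `π`-group. As `p` divides `|K/L|`, `d` is a power of
`p`: `K/L` is a `p`-group, hence abelian (its centre is normal in `G/L`). Then `M ∩ K` is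
normalized by both `K` and `M`, so it equals `L`. Modulo `N = core M`, `KN/N ≅ K/L` is an abelian
minimal normal subgroup complemented by `M/N`, whose core is trivial; it is therefore its own
centralizer and the only minimal normal subgroup, i.e. `X_M`.

In a chief series an avoided factor `s i < s (i + 1)` has `s i ≤ M` but `s (i + 1) ≰ M`, so there
is at most one; if every factor were covered, induction would give `s j ≤ M` for all `j`.
-/
namespace Subgroup

variable {G : Type*} [Group G]

theorem relIndex_sup_right_of_le_normalizer {A B : Subgroup G}
    (hAB : A ≤ normalizer (B : Set G)) : B.relIndex (A ⊔ B) = B.relIndex A := by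
  have hBN : B ≤ normalizer (B : Set G) := le_normalizer
  rw [← relIndex_subgroupOf (sup_le hAB hBN), subgroupOf_sup hAB hBN, relIndex_sup_right,
    relIndex_subgroupOf hAB]

theorem card_sup_dvd_of_le_normalizer {A B : Subgroup G} (hAB : A ≤ normalizer (B : Set G)) :
    Nat.card ↥(A ⊔ B) ∣ Nat.card A * Nat.card B := by
  rw [← relIndex_bot_left, ← relIndex_mul_relIndex ⊥ B (A ⊔ B) bot_le le_sup_right,
    relIndex_sup_right_of_le_normalizer hAB, relIndex_bot_left, mul_comm]
  exact mul_dvd_mul_right (relIndex_dvd_card _ _) _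

theorem le_normalizer_sup {B N₁ N₂ : Subgroup G} (h₁ : B ≤ normalizer (N₁ : Set G))
    (h₂ : B ≤ normalizer (N₂ : Set G)) : B ≤ normalizer ((N₁ ⊔ N₂ : Subgroup G) : Set G) :=
  fun b hb => by
    rw [mem_normalizer_iff_map_conj_eq, map_sup, mem_normalizer_iff_map_conj_eq.1 (h₁ hb),
      mem_normalizer_iff_map_conj_eq.1 (h₂ hb)]

def IsPiSubgroup (π : Set ℕ) (H : Subgroup G) : Prop :=
  ∀ q : ℕ, q.Prime → q ∣ Nat.card H → q ∈ π

variable {π : Set ℕ}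

theorem isPiSubgroup_bot : (⊥ : Subgroup G).IsPiSubgroup π := fun _ hq hdvd =>
  absurd (Nat.dvd_one.1 (card_bot (G := G) ▸ hdvd)) hq.ne_one

theorem IsPiSubgroup.of_le {H K : Subgroup G} (hK : K.IsPiSubgroup π) (hHK : H ≤ K) :
    H.IsPiSubgroup π :=
  fun q hq hdvd => hK q hq (hdvd.trans (card_dvd_of_le hHK))

theorem IsPiSubgroup.map_equiv {H : Subgroup G} (hH : H.IsPiSubgroup π) (f : G ≃* G) :
    (H.map f.toMonoidHom).IsPiSubgroup π := by
  rwa [IsPiSubgroup, card_map_of_injective f.injective]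

theorem IsPiSubgroup.sup {A B : Subgroup G} (hA : A.IsPiSubgroup π) (hB : B.IsPiSubgroup π)
    (hAB : A ≤ normalizer (B : Set G)) : (A ⊔ B).IsPiSubgroup π := fun q hq hdvd =>
  ((hq.dvd_mul).1 (hdvd.trans (card_sup_dvd_of_le_normalizer hAB))).elim (hA q hq) (hB q hq)

theorem isPiSubgroup_of_forall_pow_eq_one [Finite G] {T : Subgroup G} {d : ℕ}
    (h : ∀ x ∈ T, x ^ d = 1) : T.IsPiSubgroup {q | q ∣ d} := fun q hq hdvd => by
  have := Fact.mk hq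
  obtain ⟨x, hx⟩ := exists_prime_orderOf_dvd_card' q hdvd
  rw [← hx, ← orderOf_coe]
  exact orderOf_dvd_of_pow_eq_one (h x x.2)

def piCore (π : Set ℕ) (B : Subgroup G) : Subgroup G :=
  sSup {N | N ≤ B ∧ B ≤ normalizer (N : Set G) ∧ N.IsPiSubgroup π}

theorem le_piCore {B N : Subgroup G} (hNB : N ≤ B) (hBN : B ≤ normalizer (N : Set G))
    (hN : N.IsPiSubgroup π) : N ≤ piCore π B :=
  le_sSup ⟨hNB, hBN, hN⟩

theorem piCore_spec [Finite G] (π : Set ℕ) (B : Subgroup G) :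
    piCore π B ≤ B ∧ B ≤ normalizer (piCore π B : Set G) ∧ (piCore π B).IsPiSubgroup π := by
  refine SupClosed.sSup_mem (s := {N | N ≤ B ∧ B ≤ normalizer (N : Set G) ∧ N.IsPiSubgroup π})
    ?_ (Set.toFinite _) ⟨bot_le, le_normalizer_of_normal, isPiSubgroup_bot⟩ subset_rfl
  rintro N₁ ⟨hN₁B, hBN₁, hN₁⟩ N₂ ⟨hN₂B, hBN₂, hN₂⟩
  exact ⟨sup_le hN₁B hN₂B, le_normalizer_sup hBN₁ hBN₂, hN₁.sup hN₂ (hN₁B.trans hBN₂)⟩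

theorem le_normalizer_piCore [Finite G] {A B : Subgroup G} (hBA : B ≤ normalizer (A : Set G)) :
    B ≤ normalizer (piCore π A : Set G) := by
  intro b hb
  obtain ⟨hle, hnorm, hpi⟩ := piCore_spec π A
  have hA : A.map (MulAut.conj b).toMonoidHom = A := mem_normalizer_iff_map_conj_eq.1 (hBA hb)
  have hconj : (piCore π A).map (MulAut.conj b).toMonoidHom ≤ piCore π A :=
    le_piCore ((map_mono hle).trans hA.le)
      (hA.ge.trans ((map_mono hnorm).trans (map_equiv_normalizer_eq _ _).le)) (hpi.map_equiv _)
  rw [mem_normalizer_iff_map_conj_eq]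
  exact eq_of_le_of_card_ge hconj (card_map_of_injective (MulAut.conj b).injective).ge

theorem piCore_mono [Finite G] {A B : Subgroup G} (hAB : A ≤ B)
    (hBA : B ≤ normalizer (A : Set G)) : piCore π A ≤ piCore π B :=
  le_piCore ((piCore_spec π A).1.trans hAB) (le_normalizer_piCore hBA) (piCore_spec π A).2.2

theorem IsSubnormal.piCore_le [Finite G] {A : Subgroup G} (hA : A.IsSubnormal) :
    piCore π A ≤ piCore π ⊤ := by
  induction hA with
  | top => exact le_rfl
  | step H K hHK _ hN ih =>
    exact (piCore_mono hHK (le_normalizer_of_normal_subgroupOf hHK)).trans ih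

end Subgroup

open Subgroup in
theorem IsMinNormal.isPiSubgroup_of_isSubnormal {G : Type*} [Group G] [Finite G] {π : Set ℕ}
    {H T : Subgroup G} (hH : IsMinNormal H) (hT : T.IsSubnormal) (hTH : T ≤ H) (hT1 : T ≠ ⊥)
    (hTπ : T.IsPiSubgroup π) : H.IsPiSubgroup π := by
  obtain ⟨-, hOnorm, hOπ⟩ := piCore_spec π (⊤ : Subgroup G)
  have hTO : T ≤ piCore π ⊤ := (le_piCore le_rfl le_normalizer hTπ).trans hT.piCore_le
  have := normalizer_eq_top_iff.1 (top_le_iff.1 hOnorm)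
  have := hH.2.1
  rcases hH.2.2 (piCore π ⊤ ⊓ H) inferInstance inf_le_right with h | h
  · exact absurd (le_bot_iff.1 (h ▸ le_inf hTO hTH)) hT1
  · exact hOπ.of_le (inf_eq_right.1 h)

section ChiefFactor

variable {G : Type*} [Group G]

theorem isMinNormal_map_mk'_iff {K L : Subgroup G} [K.Normal] [L.Normal] :
    IsMinNormal (K.map (QuotientGroup.mk' L)) ↔
      ¬ K ≤ L ∧ ∀ T : Subgroup G, T.Normal → L ≤ T → T ≤ K ⊔ L → T = L ∨ T = K ⊔ L := by
  have hsurj := QuotientGroup.mk'_surjective L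
  have hbot : ∀ T : Subgroup G, T.map (QuotientGroup.mk' L) = ⊥ ↔ T ≤ L := fun T => by
    rw [Subgroup.map_eq_bot_iff, QuotientGroup.ker_mk']
  have hcomap : (K.map (QuotientGroup.mk' L)).comap (QuotientGroup.mk' L) = K ⊔ L := by
    rw [Subgroup.comap_map_eq, QuotientGroup.ker_mk']
  constructor
  · rintro ⟨hne, -, hmin⟩
    refine ⟨fun h => hne ((hbot K).2 h), fun T hT hLT hTK => ?_⟩
    rcases hmin _ (hT.map _ hsurj) (Subgroup.map_le_iff_le_comap.2 (hcomap ▸ hTK)) with h | h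
    · exact Or.inl (le_antisymm ((hbot T).1 h) hLT)
    · right
      rw [← hcomap, ← h, Subgroup.comap_map_eq, QuotientGroup.ker_mk', sup_eq_left.2 hLT]
  · rintro ⟨hKL, hmin⟩
    refine ⟨fun h => hKL ((hbot K).1 h), ‹K.Normal›.map _ hsurj, fun Y hY hYK => ?_⟩
    rw [← Subgroup.map_comap_eq_self_of_surjective hsurj Y]
    have hLY : L ≤ Y.comap (QuotientGroup.mk' L) := by
      simpa [QuotientGroup.ker_mk'] using Subgroup.ker_le_comap (QuotientGroup.mk' L) Y
    rcases hmin _ (hY.comap _) hLY (hcomap ▸ Subgroup.comap_mono hYK) with h | h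
    · exact Or.inl ((hbot _).2 h.le)
    · right
      rw [h, ← hcomap, Subgroup.map_comap_eq_self_of_surjective hsurj]

theorem IsMinNormal.not_le_of_map {K L : Subgroup G} [K.Normal] [L.Normal]
    (hchief : IsMinNormal (K.map (QuotientGroup.mk' L))) : ¬ K ≤ L :=
  (isMinNormal_map_mk'_iff.1 hchief).1

theorem IsMinNormal.eq_or_eq_of_map {K L : Subgroup G} [K.Normal] [L.Normal]
    (hchief : IsMinNormal (K.map (QuotientGroup.mk' L))) (hLK : L ≤ K) {T : Subgroup G}
    (hT : T.Normal) (hLT : L ≤ T) (hTK : T ≤ K) : T = L ∨ T = K := by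
  simpa only [sup_eq_left.2 hLK] using
    (isMinNormal_map_mk'_iff.1 hchief).2 T hT hLT (hTK.trans le_sup_left)

theorem IsMinNormal.map_mk'_of_inf_eq {K L N : Subgroup G} [K.Normal] [L.Normal] [N.Normal]
    (hchief : IsMinNormal (K.map (QuotientGroup.mk' L))) (hLK : L ≤ K) (hKN : K ⊓ N = L) :
    IsMinNormal (K.map (QuotientGroup.mk' N)) := by
  refine isMinNormal_map_mk'_iff.2 ⟨fun h => hchief.not_le_of_map (hKN ▸ le_inf le_rfl h),
    fun T hT hNT hTKN => ?_⟩
  have hLT : L ≤ K ⊓ T := le_inf hLK (hKN ▸ inf_le_right.trans hNT)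
  rcases hchief.eq_or_eq_of_map hLK inferInstance hLT inf_le_left with h | h
  · refine Or.inl (le_antisymm (fun t ht => ?_) hNT)
    obtain ⟨k, hk, n, hn, rfl⟩ := Subgroup.mem_sup_of_normal_right.1 (hTKN ht)
    have hkT : k ∈ K ⊓ T := ⟨hk, by simpa using T.mul_mem ht (T.inv_mem (hNT hn))⟩
    rw [h, ← hKN] at hkT
    exact N.mul_mem hkT.2 hn
  · exact Or.inr (le_antisymm hTKN (sup_le (inf_eq_left.1 h) hNT))

theorem coe_eq_mul_inf_iff_le_sup {K L M : Subgroup G} [L.Normal] (hLK : L ≤ K) :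
    (K : Set G) = (L : Set G) * ((M ⊓ K : Subgroup G) : Set G) ↔ K ≤ L ⊔ M := by
  rw [Subgroup.mul_inf_assoc L M K hLK, ← Subgroup.normal_mul, eq_comm, Set.inter_eq_right]
  exact SetLike.coe_subset_coe

theorem le_of_le_sup_of_inf_le {K L M : Subgroup G} [L.Normal] (hLK : L ≤ K)
    (hcover : K ≤ L ⊔ M) (havoid : M ⊓ K ≤ L) : K ≤ L := fun k hk => by
  obtain ⟨l, hl, m, hm, rfl⟩ := Subgroup.mem_sup_of_normal_left.1 (hcover hk)
  have hmK : m ∈ K := by simpa using K.mul_mem (K.inv_mem (hLK hl)) hk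
  exact L.mul_mem hl (havoid ⟨hm, hmK⟩)

end ChiefFactor

theorem Fin.exists_castSucc_and_not_succ {n : ℕ} {P : Fin (n + 1) → Prop} (h0 : P 0)
    (hlast : ¬ P (Fin.last n)) : ∃ i : Fin n, P i.castSucc ∧ ¬ P i.succ := by
  by_contra! h
  exact hlast (Fin.induction h0 h (Fin.last n))

theorem Subgroup.isSubnormal_of_series {G : Type*} [Group G] {n : ℕ} {s : Fin (n + 1) → Subgroup G}
    (hlast : s (Fin.last n) = ⊤) (hle : ∀ i : Fin n, s i.castSucc ≤ s i.succ)
    (hnormal : ∀ i : Fin n, ((s i.castSucc).subgroupOf (s i.succ)).Normal) (j : Fin (n + 1)) :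
    (s j).IsSubnormal := by
  induction j using Fin.reverseInduction with
  | last => exact hlast ▸ .top
  | cast i ih => exact .step _ _ (hle i) ih (hnormal i)

theorem IsPSolvable.isPGroup_of_isMinNormal_map {G : Type*} [Group G] [Finite G] {p : ℕ}
    (hp : p.Prime) (hps : IsPSolvable p G) {K L : Subgroup G} [hK : K.Normal] [L.Normal]
    (hchief : IsMinNormal (K.map (QuotientGroup.mk' L)))
    (hdvd : p ∣ Nat.card (K.map (QuotientGroup.mk' L))) :
    IsPGroup p (K.map (QuotientGroup.mk' L)) := by
  obtain ⟨n, s, hs0, hslast, hle, hnormal, hfactor⟩ := hps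
  obtain ⟨i, hi, hi'⟩ := Fin.exists_castSucc_and_not_succ (P := fun j => s j ⊓ K ≤ L)
    (by simp [hs0]) (by simpa [hslast] using hchief.not_le_of_map)
  set T := (s i.succ ⊓ K).map (QuotientGroup.mk' L)
  set d := (s i.castSucc).relIndex (s i.succ)
  have hpow : ∀ x ∈ T, x ^ d = 1 := by
    rintro _ ⟨a, ⟨ha, haK⟩, rfl⟩
    have hd := Subgroup.pow_index_mem ((s i.castSucc).subgroupOf (s i.succ)) (⟨a, ha⟩ : s i.succ)
    rw [Subgroup.mem_subgroupOf, Subgroup.coe_pow] at hd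
    rw [← map_pow, QuotientGroup.mk'_apply, QuotientGroup.eq_one_iff]
    exact hi ⟨hd, K.pow_mem haK d⟩
  have hTsub : T.IsSubnormal :=
    ((Subgroup.isSubnormal_of_series hslast hle hnormal i.succ).inf hK.isSubnormal).map
      (QuotientGroup.mk'_surjective L)
  have hT1 : T ≠ ⊥ := by
    rwa [Ne, Subgroup.map_eq_bot_iff, QuotientGroup.ker_mk']
  have hHd := hchief.isPiSubgroup_of_isSubnormal hTsub (Subgroup.map_mono inf_le_right) hT1
    (Subgroup.isPiSubgroup_of_forall_pow_eq_one hpow)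
  obtain ⟨k, hk⟩ := (hfactor i).resolve_right (not_not.2 (hHd p hp hdvd))
  rw [show d = p ^ k from hk] at hHd
  refine IsPGroup.of_card (Nat.eq_prime_pow_of_unique_prime_dvd Nat.card_pos.ne' fun hq hqd => ?_)
  exact (Nat.prime_dvd_prime_iff_eq hq hp).1 (hq.dvd_of_dvd_pow (hHd _ hq hqd))

theorem IsMinNormal.le_centralizer_of_isPGroup {G : Type*} [Group G] [Finite G] {p : ℕ}
    [Fact p.Prime] {H : Subgroup G} (hH : IsMinNormal H) (hpH : IsPGroup p H) :
    H ≤ Subgroup.centralizer H := by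
  have := hH.2.1
  have : Nontrivial H := (Subgroup.nontrivial_iff_ne_bot H).2 hH.1
  have hZ : (Subgroup.center H).map H.subtype = H := by
    refine (hH.2.2 _ inferInstance (Subgroup.map_subtype_le _)).resolve_left ?_
    rw [Subgroup.map_eq_bot_iff_of_injective _ H.subtype_injective,
      ← Ne, ← Subgroup.nontrivial_iff_ne_bot]
    exact hpH.center_nontrivial
  intro x hx y hy
  rw [← hZ] at hx
  obtain ⟨z, hz, rfl⟩ := hx
  exact congrArg Subtype.val (Subgroup.mem_center_iff.1 hz ⟨y, hy⟩)

theorem Subgroup.relIndex_eq_index_of_sup_eq_top {G : Type*} [Group G] [Finite G]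
    {K M : Subgroup G} [K.Normal] (hsup : K ⊔ M = ⊤) : M.relIndex K = M.index := by
  have h₁ : M.relIndex K * K.index = (M ⊓ K).index := by
    simpa using relIndex_inf_mul_relIndex M K ⊤
  have h₂ : K.relIndex M * M.index = (M ⊓ K).index := by
    simpa [inf_comm] using relIndex_inf_mul_relIndex K M ⊤
  rw [← relIndex_sup_left, hsup, relIndex_top_right] at h₂
  exact Nat.eq_of_mul_eq_mul_left (Nat.pos_of_ne_zero index_ne_zero_of_finite)
    (by rw [mul_comm, h₁, h₂])

theorem index_dvd_card_map_mk' {G : Type*} [Group G] [Finite G] {K L M : Subgroup G}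
    [K.Normal] [L.Normal] (hLK : L ≤ K) (hLM : L ≤ M) (hsup : K ⊔ M = ⊤) :
    M.index ∣ Nat.card (K.map (QuotientGroup.mk' L)) := by
  rw [← Subgroup.relIndex_ker, QuotientGroup.ker_mk',
    ← Subgroup.relIndex_mul_relIndex L (M ⊓ K) K (le_inf hLM hLK) inf_le_right,
    Subgroup.inf_relIndex_right, Subgroup.relIndex_eq_index_of_sup_eq_top hsup]
  exact dvd_mul_left _ _

theorem Subgroup.normalCore_map_mk'_normalCore {G : Type*} [Group G] (M : Subgroup G) :
    (M.map (QuotientGroup.mk' M.normalCore)).normalCore = ⊥ := by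
  set N := M.normalCore
  set U := (M.map (QuotientGroup.mk' N)).normalCore
  have hUN : U.comap (QuotientGroup.mk' N) ≤ N := by
    refine normal_le_normalCore.2 ((comap_mono (normalCore_le _)).trans ?_)
    rw [comap_map_eq, QuotientGroup.ker_mk', sup_eq_left.2 M.normalCore_le]
  rw [eq_bot_iff, ← map_comap_eq_self_of_surjective (QuotientGroup.mk'_surjective N) U]
  exact (map_mono hUN).trans (map_eq_bot_iff _ |>.2 (QuotientGroup.ker_mk' N).ge).le

theorem IsMinNormal.eq_of_le_centralizer {G : Type*} [Group G] {A H X : Subgroup G}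
    (hA : IsMinNormal A) (hAc : A ≤ Subgroup.centralizer A) (hsup : A ⊔ H = ⊤)
    (hcore : H.normalCore = ⊥) (hX : IsMinNormal X) : X = A := by
  have := hA.2.1
  have := hX.2.1
  set C := Subgroup.centralizer (A : Set G)
  have hCH : C ⊓ H = ⊥ := by
    have : (C ⊓ H).Normal := by
      rw [← Subgroup.normalizer_eq_top_iff, eq_top_iff, ← hsup]
      refine sup_le (Subgroup.le_normalizer_iff.2 fun a ha c hc => ?_)
        ((le_inf Subgroup.le_normalizer_of_normal Subgroup.le_normalizer).trans
          Subgroup.inf_normalizer_le_normalizer_inf)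
      rwa [Subgroup.mem_centralizer_iff.1 hc.1 a ha, mul_inv_cancel_right]
    exact le_bot_iff.1 (hcore ▸ Subgroup.normal_le_normalCore.2 inf_le_right)
  have hCA : C ≤ A := fun c hc => by
    obtain ⟨a, ha, h, hh, rfl⟩ := Subgroup.mem_sup_of_normal_left.1 (hsup ▸ Subgroup.mem_top c)
    have hhC : h ∈ C ⊓ H := ⟨by simpa using C.mul_mem (C.inv_mem (hAc ha)) hc, hh⟩
    rw [hCH, Subgroup.mem_bot] at hhC
    simpa [hhC] using ha
  have hXA : X ≤ A := by
    rcases hX.2.2 (X ⊓ A) inferInstance inf_le_left with h | h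
    · refine fun x hx => hCA (Subgroup.mem_centralizer_iff.2 fun a ha => ?_)
      exact (Subgroup.commute_of_normal_of_disjoint A X hA.2.1 hX.2.1
        (disjoint_iff.2 (inf_comm X A ▸ h)) a x ha hx).eq
    · exact inf_eq_left.1 h
  exact (hA.2.2 X hX.2.1 hXA).resolve_left hX.1

theorem conjIso_map_of_injOn {G : Type*} [Group G] {A B : Subgroup G} [A.Normal] [B.Normal]
    (φ : G ⧸ A →* G ⧸ B) (hφ : ∀ g : G, φ g = g) {X : Subgroup (G ⧸ A)} (hX : Set.InjOn φ X) :
    ConjIso X (X.map φ) := by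
  refine ⟨MulEquiv.ofBijective (φ.subgroupMap X)
    ⟨fun x y h => Subtype.ext (hX x.2 y.2 (congrArg Subtype.val h)),
      φ.subgroupMap_surjective X⟩, fun g x x' hx => ?_⟩
  change φ x' = (g : G ⧸ B) * φ x * (g : G ⧸ B)⁻¹
  rw [hx, map_mul, map_mul, map_inv, hφ]

theorem conjIso_map_mk' {G : Type*} [Group G] {K L N : Subgroup G} [L.Normal] [N.Normal]
    (hLN : L ≤ N) (hKN : K ⊓ N ≤ L) :
    ConjIso (K.map (QuotientGroup.mk' L)) (K.map (QuotientGroup.mk' N)) := by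
  set φ := QuotientGroup.map L N (MonoidHom.id G) hLN
  have hmap : (K.map (QuotientGroup.mk' L)).map φ = K.map (QuotientGroup.mk' N) := by
    rw [Subgroup.map_map]; rfl
  refine hmap ▸ conjIso_map_of_injOn φ (fun _ => rfl) ?_
  rintro _ ⟨a, ha, rfl⟩ _ ⟨b, hb, rfl⟩ hab
  have hN : a⁻¹ * b ∈ N := QuotientGroup.eq.1 hab
  exact QuotientGroup.eq.2 (hKN ⟨K.mul_mem (K.inv_mem ha) hb, hN⟩)

section MaximalSubgroup

variable {G : Type*} [Group G] {M K L : Subgroup G}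

theorem IsCoatom.le_and_sup_eq_top_of_not_le_sup (hM : IsCoatom M) (hcov : ¬ K ≤ L ⊔ M) :
    L ≤ M ∧ ¬ K ≤ M ∧ K ⊔ M = ⊤ := by
  have hLM : L ≤ M := by
    by_contra h
    exact hcov (hM.2 _ (right_lt_sup.2 h) ▸ le_top)
  have hKM : ¬ K ≤ M := fun h => hcov (h.trans le_sup_right)
  exact ⟨hLM, hKM, sup_comm M K ▸ hM.2 _ (left_lt_sup.2 hKM)⟩

theorem commutator_le_of_isPSolvable [Finite G] {p : ℕ} (hp : p.Prime) (hps : IsPSolvable p G)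
    (hdvd : p ∣ M.index) [K.Normal] [L.Normal] (hLK : L ≤ K)
    (hchief : IsMinNormal (K.map (QuotientGroup.mk' L))) (hLM : L ≤ M) (hsup : K ⊔ M = ⊤) :
    ⁅K, K⁆ ≤ L := by
  have := Fact.mk hp
  have hpH := hps.isPGroup_of_isMinNormal_map hp hchief
    (hdvd.trans (index_dvd_card_map_mk' hLK hLM hsup))
  have hab := Subgroup.commutator_eq_bot_iff_le_centralizer.2
    (hchief.le_centralizer_of_isPGroup hpH)
  rwa [← Subgroup.map_commutator, Subgroup.map_eq_bot_iff, QuotientGroup.ker_mk'] at hab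

theorem inf_eq_of_commutator_le [K.Normal] [L.Normal] (hLK : L ≤ K)
    (hchief : IsMinNormal (K.map (QuotientGroup.mk' L))) (hLM : L ≤ M) (hKM : ¬ K ≤ M)
    (hsup : K ⊔ M = ⊤) (hcomm : ⁅K, K⁆ ≤ L) : M ⊓ K = L := by
  have hnormal : (M ⊓ K).Normal := by
    rw [← Subgroup.normalizer_eq_top_iff, eq_top_iff, ← hsup]
    refine sup_le (Subgroup.le_normalizer_iff.2 fun k hk x hx => ?_)
      ((le_inf Subgroup.le_normalizer Subgroup.le_normalizer_of_normal).trans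
        Subgroup.inf_normalizer_le_normalizer_inf)
    have hkx : k * x * k⁻¹ * x⁻¹ ∈ L := Subgroup.commutator_le.1 hcomm k hk x hx.2
    simpa using (M ⊓ K).mul_mem (le_inf hLM hLK hkx) hx
  exact (hchief.eq_or_eq_of_map hLK hnormal (le_inf hLM hLK) inf_le_right).resolve_right
    fun h => hKM (h ▸ inf_le_left)

theorem conjIso_of_commutator_le [K.Normal] [L.Normal] (hLK : L ≤ K)
    (hchief : IsMinNormal (K.map (QuotientGroup.mk' L))) (hLM : L ≤ M) (hKM : ¬ K ≤ M)
    (hsup : K ⊔ M = ⊤) (hcomm : ⁅K, K⁆ ≤ L) (X : Subgroup (G ⧸ M.normalCore))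
    (hX : IsMinNormal X) : ConjIso (K.map (QuotientGroup.mk' L)) X := by
  set N := M.normalCore
  have hLN : L ≤ N := Subgroup.normal_le_normalCore.2 hLM
  have hKN : K ⊓ N = L :=
    (hchief.eq_or_eq_of_map hLK inferInstance (le_inf hLK hLN) inf_le_left).resolve_right
      fun h => hKM ((inf_eq_left.1 h).trans M.normalCore_le)
  have hcent :
      K.map (QuotientGroup.mk' N) ≤ Subgroup.centralizer (K.map (QuotientGroup.mk' N)) := by
    rw [← Subgroup.commutator_eq_bot_iff_le_centralizer, ← Subgroup.map_commutator,
      Subgroup.map_eq_bot_iff, QuotientGroup.ker_mk']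
    exact hcomm.trans hLN
  have hsupN : K.map (QuotientGroup.mk' N) ⊔ M.map (QuotientGroup.mk' N) = ⊤ := by
    rw [← Subgroup.map_sup, hsup, Subgroup.map_top_of_surjective _ (QuotientGroup.mk'_surjective N)]
  rw [(hchief.map_mk'_of_inf_eq hLK hKN).eq_of_le_centralizer hcent hsupN
    M.normalCore_map_mk'_normalCore hX]
  exact conjIso_map_mk' hLN hKN.le

theorem inf_eq_of_not_le_sup [Finite G] {p : ℕ} (hp : p.Prime) (hM : IsCoatom M)
    (hdvd : p ∣ M.index) (hps : IsPSolvable p G) [K.Normal] [L.Normal] (hLK : L ≤ K)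
    (hchief : IsMinNormal (K.map (QuotientGroup.mk' L))) (hcov : ¬ K ≤ L ⊔ M) : M ⊓ K = L := by
  obtain ⟨hLM, hKM, hsup⟩ := hM.le_and_sup_eq_top_of_not_le_sup hcov
  exact inf_eq_of_commutator_le hLK hchief hLM hKM hsup
    (commutator_le_of_isPSolvable hp hps hdvd hLK hchief hLM hsup)

theorem covered_xor_avoided_of_isPSolvable [Finite G] {p : ℕ} (hp : p.Prime) (hM : IsCoatom M)
    (hdvd : p ∣ M.index) (hps : IsPSolvable p G) [K.Normal] [L.Normal] (hLK : L ≤ K)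
    (hchief : IsMinNormal (K.map (QuotientGroup.mk' L))) (X : Subgroup (G ⧸ M.normalCore))
    (hX : IsMinNormal X) :
    Xor' ((K : Set G) = (L : Set G) * ((M ⊓ K : Subgroup G) : Set G))
      (M ⊓ K ≤ L ∧ (∀ a b : G, a ∈ K → b ∈ K → a * b * a⁻¹ * b⁻¹ ∈ L) ∧
        ConjIso (K.map (QuotientGroup.mk' L)) X) := by
  rw [coe_eq_mul_inf_iff_le_sup hLK]
  by_cases hcov : K ≤ L ⊔ M
  · exact Or.inl ⟨hcov, fun h => hchief.not_le_of_map (le_of_le_sup_of_inf_le hLK hcov h.1)⟩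
  obtain ⟨hLM, hKM, hsup⟩ := hM.le_and_sup_eq_top_of_not_le_sup hcov
  have hcomm := commutator_le_of_isPSolvable hp hps hdvd hLK hchief hLM hsup
  exact Or.inr ⟨⟨(inf_eq_of_commutator_le hLK hchief hLM hKM hsup hcomm).le,
    fun a b ha hb => Subgroup.commutator_le.1 hcomm a ha b hb,
    conjIso_of_commutator_le hLK hchief hLM hKM hsup hcomm X hX⟩, hcov⟩

theorem existsUnique_avoided_of_isPSolvable [Finite G] {p : ℕ} (hp : p.Prime) (hM : IsCoatom M)
    (hdvd : p ∣ M.index) (hps : IsPSolvable p G) {n : ℕ} {s : Fin (n + 1) → Subgroup G}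
    (hs0 : s 0 = ⊥) (hslast : s (Fin.last n) = ⊤) (hmono : ∀ i : Fin n, s i.castSucc ≤ s i.succ)
    (hnorm : ∀ i, (s i).Normal)
    (hfac : ∀ i : Fin n, IsMinNormal ((s i.succ).map
      (@QuotientGroup.mk' G _ (s i.castSucc) (hnorm i.castSucc)))) :
    (∃! i : Fin n, s i.succ ⊓ M ≤ s i.castSucc) ∧
      ∀ i : Fin n, ¬ (s i.succ ⊓ M ≤ s i.castSucc) →
        ((s i.succ : Set G) = (s i.castSucc : Set G) * ((M ⊓ s i.succ : Subgroup G) : Set G)) := by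
  have hcover (i : Fin n) (hi : ¬ s i.succ ⊓ M ≤ s i.castSucc) : s i.succ ≤ s i.castSucc ⊔ M := by
    have := hnorm i.succ
    have := hnorm i.castSucc
    by_contra hcov
    exact hi (inf_comm M _ ▸ (inf_eq_of_not_le_sup hp hM hdvd hps (hmono i) (hfac i) hcov).le)
  have havoided (i : Fin n) (hi : s i.succ ⊓ M ≤ s i.castSucc) :
      s i.castSucc ≤ M ∧ ¬ s i.succ ≤ M := by
    have := hnorm i.succ
    have := hnorm i.castSucc
    refine ⟨fun x hx => ?_, fun h => (hfac i).not_le_of_map fun x hx => hi ⟨hx, h hx⟩⟩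
    by_contra hxM
    have hsup : s i.castSucc ⊔ M = ⊤ := hM.2 _ (right_lt_sup.2 fun h => hxM (h hx))
    exact (hfac i).not_le_of_map
      (le_of_le_sup_of_inf_le (hmono i) (hsup ▸ le_top) (inf_comm M _ ▸ hi))
  refine ⟨?_, fun i hi => (coe_eq_mul_inf_iff_le_sup (hmono i)).2 (hcover i hi)⟩
  obtain ⟨i, hi⟩ : ∃ i : Fin n, s i.succ ⊓ M ≤ s i.castSucc := by
    by_contra! h
    have hle (j : Fin (n + 1)) : s j ≤ M :=
      Fin.induction (hs0 ▸ bot_le) (fun i hi => (hcover i (h i)).trans (sup_le hi le_rfl)) j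
    exact hM.1 (top_unique (hslast ▸ hle (Fin.last n)))
  have hnot_lt (a b : Fin n) (ha : s a.succ ⊓ M ≤ s a.castSucc)
      (hb : s b.succ ⊓ M ≤ s b.castSucc) : ¬ a < b := fun hab =>
    (havoided a ha).2 ((Fin.monotone_iff_le_succ.2 hmono (Fin.succ_le_castSucc_iff.2 hab)).trans
      (havoided b hb).1)
  exact ⟨i, hi, fun j hj =>
    le_antisymm (not_lt.1 (hnot_lt i j hi hj)) (not_lt.1 (hnot_lt j i hj hi))⟩

end MaximalSubgroup

theorem stmt8 {G : Type*} [Group G] [Finite G] (p : ℕ) (hp : p.Prime)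
    (M : Subgroup G) (hM : IsCoatom M) (hdvd : p ∣ M.index)
    (hps : IsPSolvable p G)
    (K L : Subgroup G) [hKn : K.Normal] [hLn : L.Normal] (hLK : L ≤ K)
    (hchief : IsMinNormal (K.map (QuotientGroup.mk' L))) :
    (∀ X : Subgroup (G ⧸ M.normalCore), IsMinNormal X →
      Xor' ((K : Set G) = (L : Set G) * ((M ⊓ K : Subgroup G) : Set G))
        (M ⊓ K ≤ L ∧ (∀ a b : G, a ∈ K → b ∈ K → a * b * a⁻¹ * b⁻¹ ∈ L) ∧
          ConjIso (K.map (QuotientGroup.mk' L)) X)) ∧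
    (∀ (n : ℕ) (s : Fin (n + 1) → Subgroup G), s 0 = ⊥ → s (Fin.last n) = ⊤ →
      (∀ i : Fin n, s i.castSucc ≤ s i.succ) →
      ∀ hnorm : ∀ i, (s i).Normal,
      (∀ i : Fin n, IsMinNormal ((s i.succ).map
        (@QuotientGroup.mk' G _ (s i.castSucc) (hnorm i.castSucc)))) →
      (∃! i : Fin n, s i.succ ⊓ M ≤ s i.castSucc) ∧
      ∀ i : Fin n, ¬ (s i.succ ⊓ M ≤ s i.castSucc) →
        ((s i.succ : Set G) =
          (s i.castSucc : Set G) * ((M ⊓ s i.succ : Subgroup G) : Set G))) :=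
  ⟨covered_xor_avoided_of_isPSolvable hp hM hdvd hps hLK hchief,
    fun _ _ hs0 hslast hmono hnorm hfac =>
      existsUnique_avoided_of_isPSolvable hp hM hdvd hps hs0 hslast hmono hnorm hfac⟩
end

section
/- Let G be a finite group and U = ⋂_{i=1}^n M_i a regular intersection of maximal subgroups M₁,…,M_n. Then |G:U| = ∏_{i=1}^n |G:M_i| (i.e., U is a complete intersection of the M_i), and U either covers or avoids every chief factor of G. -/
open scoped Pointwise

/-- `X ≤ G/A` is isomorphic, as a `G`-module, to the dual module
`Y* = Hom(Y, ℂˣ)` of `Y ≤ G/B`, where `(λ^g)(y^g) = λ(y)`. -/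
def ConjDualIso {G : Type*} [Group G] {A B : Subgroup G} [A.Normal] [B.Normal]
    (X : Subgroup (G ⧸ A)) (Y : Subgroup (G ⧸ B)) : Prop :=
  ∃ e : X ≃* (Y →* ℂˣ), ∀ (g : G) (x x' : X) (y y' : Y),
    (x' : G ⧸ A) = QuotientGroup.mk g * (x : G ⧸ A) * (QuotientGroup.mk g)⁻¹ →
    (y' : G ⧸ B) = QuotientGroup.mk g * (y : G ⧸ B) * (QuotientGroup.mk g)⁻¹ →
    e x' y' = e x y

/-- `U` is the regular intersection of the maximal subgroups `M i`. -/
def IsRegularIntersectionOf {G : Type*} [Group G] {ι : Type*} [Fintype ι]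
    (U : Subgroup G) (M : ι → Subgroup G) : Prop :=
  (∀ i, IsCoatom (M i)) ∧
  (∀ p : ℕ, p.Prime → p ∣ U.index → IsPSolvable p G) ∧
  U = ⨅ i, M i ∧
  ∀ i j, i ≠ j →
    ∀ (X : Subgroup (G ⧸ (M i).normalCore)) (Y : Subgroup (G ⧸ (M j).normalCore)),
      IsMinNormal X → IsMinNormal Y → ¬ ConjIso X Y ∧ ¬ ConjDualIso X Y

/-!
For normal `A ≤ B` and `W ≤ G`, the index `|B : A (W ∩ B)|` (`coverDefect W A B`) is `1` exactly
when `W` covers `B / A`; it is multiplicative along normal series and equals `|G : W|` for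
`⊥ ≤ ⊤`. Let `T / A` be a chief factor and `M` a maximal subgroup such that `G` is `p`-solvable
for all `p ∣ |G : M|`. Unless `M` covers `T / A` for a trivial reason (`T ≤ M`, `A ⊄ M`, or
`|T : A|` prime to `|G : M|`), `T / A` is an abelian `p`-group, so `A (M ∩ T)` is normal and `M`
covers or avoids `T / A`; when it avoids, `T / A ≅ X_M` as `G`-groups. Since the `X_{M i}` are
pairwise non-isomorphic, at most one `M i` avoids a given chief factor, so on every chief factor
`∏ i, coverDefect (M i)` divides `coverDefect U`. Multiplied along a chief series both sides
become `∏ i, |G : M i|` and `|G : U|`; once these are equal, every divisibility is an equality,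
and `U` covers or avoids each chief factor. The index formula follows by induction on the number
of `M i`: the intersection `W` of the others cannot avoid the chief factor of `G` under `X_{M k}`,
so it covers it and `G = W M_k`.
-/

theorem Nat.eq_of_dvd_of_dvd_of_mul_eq_mul {a b c d : ℕ} (hab : a ∣ b) (hcd : c ∣ d)
    (h : a * c = b * d) (hbd : b * d ≠ 0) : a = b := by
  obtain ⟨k, rfl⟩ := hcd
  have hc : 0 < c := Nat.pos_of_ne_zero fun hc => hbd (by simp [hc])
  refine Nat.dvd_antisymm hab ⟨k, Nat.eq_of_mul_eq_mul_right hc ?_⟩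
  rw [h]
  ring

def IsPPowOrCoprime (p n : ℕ) : Prop :=
  (∃ k, n = p ^ k) ∨ ¬ p ∣ n

namespace IsPPowOrCoprime

variable {p m n : ℕ}

theorem of_dvd (hp : p.Prime) (hm : IsPPowOrCoprime p m) (hnm : n ∣ m) :
    IsPPowOrCoprime p n := by
  rcases hm with ⟨k, rfl⟩ | hm
  · obtain ⟨j, -, rfl⟩ := (Nat.dvd_prime_pow hp).mp hnm
    exact Or.inl ⟨j, rfl⟩
  · exact Or.inr fun hpn => hm (hpn.trans hnm)

theorem pow (hp : p.Prime) (hm : IsPPowOrCoprime p m) (k : ℕ) : IsPPowOrCoprime p (m ^ k) := by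
  rcases hm with ⟨j, rfl⟩ | hm
  · exact Or.inl ⟨j * k, (pow_mul p j k).symm⟩
  · exact Or.inr fun hpm => hm (hp.dvd_of_dvd_pow hpm)

end IsPPowOrCoprime

namespace Subgroup

variable {G : Type*} [Group G]

theorem relIndex_map_map_dvd {G' : Type*} [Group G'] (f : G →* G') (H K : Subgroup G) :
    (H.map f).relIndex (K.map f) ∣ H.relIndex K := by
  rw [← relIndex_comap]
  exact relIndex_dvd_of_le_left K (le_comap_map f H)

theorem relIndex_sup_of_le_normalizer {H N : Subgroup G} (h : H ≤ normalizer N) :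
    N.relIndex (H ⊔ N) = N.relIndex H := by
  have : (N.subgroupOf (H ⊔ N)).Normal := normal_subgroupOf_sup_of_le_normalizer h
  rw [← relIndex_subgroupOf (le_sup_left : H ≤ H ⊔ N),
    ← relIndex_sup_right (H.subgroupOf (H ⊔ N)) (N.subgroupOf (H ⊔ N)),
    ← subgroupOf_sup le_sup_left le_sup_right, subgroupOf_self, relIndex_top_right]
  rfl

theorem card_sup_dvd_of_le_normalizer_s13 {H N : Subgroup G} (h : H ≤ normalizer N) :
    Nat.card ↥(H ⊔ N) ∣ Nat.card H * Nat.card N := by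
  rw [← relIndex_bot_left (H ⊔ N), ← relIndex_mul_relIndex ⊥ N (H ⊔ N) bot_le le_sup_right,
    relIndex_sup_of_le_normalizer h, relIndex_bot_left, mul_comm]
  exact mul_dvd_mul_right (relIndex_dvd_card N H) _

theorem card_iSup_dvd_prod {ι : Type*} [Fintype ι] (H : ι → Subgroup G)
    (hH : ∀ i j, H i ≤ normalizer (H j)) : Nat.card ↥(⨆ i, H i) ∣ ∏ i, Nat.card (H i) := by
  classical
  rw [← Finset.sup_univ_eq_iSup]
  induction (Finset.univ : Finset ι) using Finset.induction_on with
  | empty => simp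
  | insert a s ha ih =>
    rw [Finset.sup_insert, Finset.prod_insert ha]
    have : H a ≤ normalizer ((s.sup H : Subgroup G) : Set G) :=
      Finset.sup_induction le_normalizer_of_normal
        (fun X hX Y hY => (le_inf hX hY).trans (normalizer_inf_normalizer_le_normalizer_sup X Y))
        (fun j _ => hH a j)
    exact (card_sup_dvd_of_le_normalizer_s13 this).trans (mul_dvd_mul_left _ ih)

theorem card_dvd_relIndex_of_inf_eq_bot {N Q K : Subgroup G} (hNK : N ≤ K)
    (hKQ : K ≤ normalizer Q) (hNQ : N ⊓ Q = ⊥) : Nat.card N ∣ Q.relIndex K := by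
  have : (Q.subgroupOf K).Normal := normal_subgroupOf_of_le_normalizer hKQ
  rw [← relIndex_bot_left, ← hNQ, inf_relIndex_left, ← relIndex_subgroupOf hNK]
  exact relIndex_dvd_index_of_normal _ _

/-- `K` acts transitively on `G ⧸ H`, with `H ⊓ K` the stabilizer of the base point. -/
theorem relIndex_eq_index_of_mul_eq_univ {H K : Subgroup G}
    (h : (K : Set G) * (H : Set G) = Set.univ) : H.relIndex K = H.index := by
  have hsmul (k : K) : k • ((1 : G) : G ⧸ H) = ((k : G) : G ⧸ H) := by
    change ((k : G) • ((1 : G) : G ⧸ H)) = _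
    rw [MulAction.Quotient.smul_mk, smul_eq_mul, mul_one]
  have hstab : MulAction.stabilizer K ((1 : G) : G ⧸ H) = H.subgroupOf K := by
    ext k
    rw [MulAction.mem_stabilizer_iff, hsmul, QuotientGroup.eq, mul_one, inv_mem_iff,
      mem_subgroupOf]
  have horbit : MulAction.orbit K ((1 : G) : G ⧸ H) = Set.univ := by
    refine Set.eq_univ_of_forall fun q => ?_
    induction q using QuotientGroup.induction_on with | H g => ?_
    obtain ⟨k, hk, h', hh', rfl⟩ : g ∈ (K : Set G) * (H : Set G) := h ▸ Set.mem_univ g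
    refine ⟨⟨k, hk⟩, ?_⟩
    change (⟨k, hk⟩ : K) • ((1 : G) : G ⧸ H) = ((k * h' : G) : G ⧸ H)
    rw [hsmul, QuotientGroup.eq]
    simpa using hh'
  rw [relIndex, ← hstab, MulAction.index_stabilizer, horbit, Set.ncard_univ, index_eq_card]

theorem index_inf_eq_mul_of_mul_eq_univ {H K : Subgroup G}
    (h : (K : Set G) * (H : Set G) = Set.univ) : (H ⊓ K).index = H.index * K.index := by
  rw [← relIndex_mul_index (inf_le_right : H ⊓ K ≤ K), inf_relIndex_right,
    relIndex_eq_index_of_mul_eq_univ h]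

def IsNontrivialNormalIn (K N : Subgroup G) : Prop :=
  N ≠ ⊥ ∧ N ≤ K ∧ K ≤ normalizer (N : Set G)

theorem isMinNormal_iff_minimal {N : Subgroup G} :
    IsMinNormal N ↔ Minimal (IsNontrivialNormalIn ⊤) N := by
  have key : ∀ Y : Subgroup G, IsNontrivialNormalIn ⊤ Y ↔ Y ≠ ⊥ ∧ Y.Normal := fun Y => by
    simp [IsNontrivialNormalIn, top_le_iff, normalizer_eq_top_iff]
  simp only [Minimal, key]
  constructor
  · rintro ⟨hN, hNn, hmin⟩
    refine ⟨⟨hN, hNn⟩, fun Y hY hYN => ?_⟩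
    rcases hmin Y hY.2 hYN with rfl | rfl
    exacts [absurd rfl hY.1, le_rfl]
  · rintro ⟨⟨hN, hNn⟩, hmin⟩
    refine ⟨hN, hNn, fun Y hYn hYN => or_iff_not_imp_left.mpr fun hY => ?_⟩
    exact le_antisymm hYN (hmin ⟨hY, hYn⟩ hYN)

theorem exists_isMinNormal_le [Finite G] {N : Subgroup G} (hN : N.Normal) (hN0 : N ≠ ⊥) :
    ∃ X, IsMinNormal X ∧ X ≤ N := by
  obtain ⟨X, hXN, hX⟩ := exists_minimal_le_of_wellFoundedLT (IsNontrivialNormalIn ⊤) N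
    ⟨hN0, le_top, (normalizer_eq_top_iff.mpr hN).ge⟩
  exact ⟨X, isMinNormal_iff_minimal.mpr hX, hXN⟩

/-- `N` is generated by the `K`-conjugates of `N₀`, which normalize each other as they are normal
subgroups of `Q`. -/
theorem exists_card_dvd_pow_of_minimal [Finite G] {Q K N N₀ : Subgroup G}
    (hKQ : K ≤ normalizer (Q : Set G)) (hN : Minimal (IsNontrivialNormalIn K) N) (hNQ : N ≤ Q)
    (hN₀N : N₀ ≤ N) (hN₀ : IsNontrivialNormalIn Q N₀) : ∃ m, Nat.card N ∣ Nat.card N₀ ^ m := by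
  obtain ⟨⟨-, hNK, hKN⟩, hmin⟩ := hN
  let C : K → Subgroup G := fun g => N₀.map (MulAut.conj (g : G))
  have hCN : ∀ g, C g ≤ N := fun g =>
    (map_mono hN₀N).trans_eq (mem_normalizer_iff_map_conj_eq.mp (hKN g.2))
  have hQC : ∀ g, Q ≤ normalizer (C g : Set G) := fun g =>
    (mem_normalizer_iff_map_conj_eq.mp (hKQ g.2)).ge.trans
      ((map_mono hN₀.2.2).trans (le_normalizer_map _))
  have hN₀C : N₀ ≤ ⨆ g, C g := fun y hy => le_iSup C 1 ⟨y, hy, by simp⟩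
  have hKC : K ≤ normalizer ((⨆ g, C g : Subgroup G) : Set G) := by
    refine le_normalizer_iff.mpr fun k hk x hx => ?_
    suffices ⨆ g, C g ≤ (⨆ g, C g).comap (MulAut.conj k) from this hx
    refine iSup_le fun g => ?_
    rintro _ ⟨y, hy, rfl⟩
    have : (k * g) * y * (k * g)⁻¹ ∈ C ⟨k * g, K.mul_mem hk g.2⟩ := ⟨y, hy, rfl⟩
    simpa [mul_assoc] using le_iSup C _ this
  have hNC : N = ⨆ g, C g := le_antisymm
    (hmin ⟨fun h => hN₀.1 (le_bot_iff.mp (h ▸ hN₀C)), (iSup_le hCN).trans hNK, hKC⟩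
      (iSup_le hCN))
    (iSup_le hCN)
  have := Fintype.ofFinite K
  refine ⟨Fintype.card K, hNC ▸ (card_iSup_dvd_prod C fun i j => ((hCN i).trans hNQ).trans
    (hQC j)).trans (dvd_of_eq ?_)⟩
  rw [Finset.prod_congr rfl fun g _ => show Nat.card (C g) = Nat.card N₀ from
    card_map_of_injective (MulAut.conj (g : G)).injective, Finset.prod_const, Finset.card_univ]

theorem isPPowOrCoprime_card_of_minimal_succ [Finite G] {p : ℕ} (hp : p.Prime)
    {Q K : Subgroup G} (hQK : Q ≤ K) (hKQ : K ≤ normalizer (Q : Set G))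
    (hpQK : IsPPowOrCoprime p (Q.relIndex K))
    (ih : ∀ N, Minimal (IsNontrivialNormalIn Q) N → IsPPowOrCoprime p (Nat.card N))
    {N : Subgroup G} (hN : Minimal (IsNontrivialNormalIn K) N) :
    IsPPowOrCoprime p (Nat.card N) := by
  by_cases hNQ : N ⊓ Q = ⊥
  · exact hpQK.of_dvd hp (card_dvd_relIndex_of_inf_eq_bot hN.1.2.1 hKQ hNQ)
  have hNQ' : N ≤ Q := (hN.2 ⟨hNQ, inf_le_left.trans hN.1.2.1,
    (le_inf hN.1.2.2 hKQ).trans inf_normalizer_le_normalizer_inf⟩ inf_le_left).trans inf_le_right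
  obtain ⟨N₀, hN₀N, hN₀⟩ := exists_minimal_le_of_wellFoundedLT (IsNontrivialNormalIn Q) N
    ⟨hN.1.1, hNQ', hQK.trans hN.1.2.2⟩
  obtain ⟨m, hm⟩ := exists_card_dvd_pow_of_minimal hKQ hN hNQ' hN₀N hN₀.1
  exact ((ih N₀ hN₀).pow hp m).of_dvd hp hm

end Subgroup

theorem IsPSolvable.of_surjective {p : ℕ} {G H : Type*} [Group G] [Group H] (hp : p.Prime)
    {f : G →* H} (hf : Function.Surjective f) (hG : IsPSolvable p G) : IsPSolvable p H := by
  obtain ⟨n, s, h0, hl, hmono, hnorm, hfac⟩ := hG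
  refine ⟨n, fun i => (s i).map f, by simp [h0],
    by simp [hl, Subgroup.map_top_of_surjective f hf], fun i => Subgroup.map_mono (hmono i),
    fun i => ?_, fun i => IsPPowOrCoprime.of_dvd hp (hfac i) (Subgroup.relIndex_map_map_dvd f _ _)⟩
  rw [Subgroup.normal_subgroupOf_iff_le_normalizer (Subgroup.map_mono (hmono i))]
  exact (Subgroup.map_mono ((Subgroup.normal_subgroupOf_iff_le_normalizer (hmono i)).mp
    (hnorm i))).trans (Subgroup.le_normalizer_map f)

open Subgroup in
theorem IsPSolvable.isPPowOrCoprime_card {p : ℕ} {G : Type*} [Group G] [Finite G]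
    (hp : p.Prime) (hG : IsPSolvable p G) {N : Subgroup G} (hN : IsMinNormal N) :
    IsPPowOrCoprime p (Nat.card N) := by
  obtain ⟨n, s, h0, hl, hmono, hnorm, hfac⟩ := hG
  suffices ∀ j N, Minimal (IsNontrivialNormalIn (s j)) N → IsPPowOrCoprime p (Nat.card N) from
    this (Fin.last n) N (hl ▸ isMinNormal_iff_minimal.mp hN)
  intro j
  induction j using Fin.induction with
  | zero => exact fun N hN => absurd (le_bot_iff.mp (h0 ▸ hN.1.2.1)) hN.1.1
  | succ i ih =>
    exact fun N => isPPowOrCoprime_card_of_minimal_succ hp (hmono i)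
      ((normal_subgroupOf_iff_le_normalizer (hmono i)).mp (hnorm i)) (hfac i) ih

theorem IsMinNormal.le_centralizer {p : ℕ} [Fact p.Prime] {G : Type*} [Group G] [Finite G]
    {N : Subgroup G} (hN : IsMinNormal N) (hpN : IsPGroup p N) :
    N ≤ Subgroup.centralizer (N : Set G) := by
  have := hN.2.1
  have : Nontrivial N := (Subgroup.nontrivial_iff_ne_bot N).mpr hN.1
  have := hpN.center_nontrivial
  obtain ⟨z, hz⟩ := exists_ne (1 : Subgroup.center N)
  have hzZ : ((z : N) : G) ∈ N ⊓ Subgroup.centralizer N :=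
    ⟨(z : N).2, fun h hh => congrArg Subtype.val (Subgroup.mem_center_iff.mp z.2 ⟨h, hh⟩)⟩
  rcases hN.2.2 (N ⊓ Subgroup.centralizer N) inferInstance inf_le_left with h | h
  · exact absurd (by simpa [h] using hzZ) hz
  · exact h.ge.trans inf_le_right

theorem IsMinNormal.map {G H : Type*} [Group G] [Group H] {f : G →* H}
    (hf : Function.Surjective f) {N : Subgroup G} (hN : IsMinNormal N) (hker : N ⊓ f.ker = ⊥) :
    IsMinNormal (N.map f) := by
  obtain ⟨hN0, hNn, hmin⟩ := hN
  refine ⟨fun h => hN0 ?_, hNn.map f hf, fun Y hYn hYN => ?_⟩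
  · rwa [inf_of_le_left ((Subgroup.map_eq_bot_iff N).mp h)] at hker
  have := hYn.comap f
  rcases hmin (N ⊓ Y.comap f) inferInstance inf_le_left with h | h
  · refine Or.inl (eq_bot_iff.mpr fun y hy => ?_)
    obtain ⟨n, hn, rfl⟩ := hYN hy
    have : n ∈ N ⊓ Y.comap f := ⟨hn, hy⟩
    rw [h, Subgroup.mem_bot] at this
    simp [this]
  · exact Or.inr (le_antisymm hYN (Subgroup.map_le_iff_le_comap.mpr (h.ge.trans inf_le_right)))

section ConjIso

variable {G : Type*} [Group G] {A B C : Subgroup G} [A.Normal] [B.Normal] [C.Normal]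
  {X : Subgroup (G ⧸ A)} {Y : Subgroup (G ⧸ B)} {Z : Subgroup (G ⧸ C)}

theorem ConjIso.trans (hXY : ConjIso X Y) (hYZ : ConjIso Y Z) : ConjIso X Z := by
  obtain ⟨e, he⟩ := hXY
  obtain ⟨e', he'⟩ := hYZ
  exact ⟨e.trans e', fun g x x' h => he' g (e x) (e x') (he g x x' h)⟩

theorem ConjIso.symm (hX : X.Normal) (hXY : ConjIso X Y) : ConjIso Y X := by
  obtain ⟨e, he⟩ := hXY
  refine ⟨e.symm, fun g y y' hy => ?_⟩
  let x' : X := ⟨_, hX.conj_mem _ (e.symm y).2 (QuotientGroup.mk g)⟩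
  have : e x' = y' := Subtype.ext (by rw [he g (e.symm y) x' rfl, e.apply_symm_apply, hy])
  rw [← this, e.symm_apply_apply]

theorem conjIso_map_quotientMap (hAC : A ≤ C) {F : Subgroup (G ⧸ A)}
    (hF : F ⊓ (QuotientGroup.map A C (MonoidHom.id G) hAC).ker = ⊥) :
    ConjIso F (F.map (QuotientGroup.map A C (MonoidHom.id G) hAC)) := by
  set φ := QuotientGroup.map A C (MonoidHom.id G) hAC
  have hinj : Function.Injective (φ.subgroupMap F) := by
    refine (injective_iff_map_eq_one _).mpr fun x hx => Subtype.ext ?_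
    have : (x : G ⧸ A) ∈ F ⊓ φ.ker := ⟨x.2, congrArg Subtype.val hx⟩
    rwa [hF, Subgroup.mem_bot] at this
  refine ⟨MulEquiv.ofBijective _ ⟨hinj, φ.subgroupMap_surjective F⟩, fun g x x' hx => ?_⟩
  change φ x' = QuotientGroup.mk g * φ x * (QuotientGroup.mk g)⁻¹
  rw [hx, map_mul, map_mul, map_inv]
  rfl

end ConjIso

namespace Subgroup

variable {G : Type*} [Group G]

/-- `W` covers the factor `B / A` iff this index is `1`, and avoids it iff it is `|B : A|`. -/
noncomputable def coverDefect (W A B : Subgroup G) : ℕ :=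
  (A ⊔ (W ⊓ B)).relIndex B

section CoverDefect

variable {W V A B C : Subgroup G}

theorem coverDefect_eq_one_iff : coverDefect W A B = 1 ↔ B ≤ A ⊔ (W ⊓ B) :=
  relIndex_eq_one

theorem coverDefect_eq_one_of_le (h : B ≤ W) : coverDefect W A B = 1 :=
  coverDefect_eq_one_iff.mpr (le_sup_of_le_right (le_inf h le_rfl))

theorem coverDefect_self : coverDefect W A A = 1 :=
  coverDefect_eq_one_iff.mpr le_sup_left

theorem coverDefect_bot_top : coverDefect W ⊥ ⊤ = W.index := by
  simp [coverDefect]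

theorem coverDefect_ne_zero [Finite G] : coverDefect W A B ≠ 0 :=
  index_ne_zero_of_finite

theorem coverDefect_dvd_of_le (h : V ≤ W) : coverDefect W A B ∣ coverDefect V A B :=
  relIndex_dvd_of_le_left B (sup_le_sup_left (inf_le_inf_right B h) A)

theorem coverDefect_dvd_relIndex_left : coverDefect W A B ∣ A.relIndex B :=
  relIndex_dvd_of_le_left B le_sup_left

theorem coverDefect_dvd_relIndex_right : coverDefect W A B ∣ W.relIndex B := by
  rw [← inf_relIndex_right]
  exact relIndex_dvd_of_le_left B le_sup_right

theorem relIndex_eq_coverDefect_mul [A.Normal] (hAB : A ≤ B) :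
    A.relIndex B = coverDefect W A B * (W ⊓ A).relIndex (W ⊓ B) := by
  rw [coverDefect,
    ← relIndex_mul_relIndex A (A ⊔ (W ⊓ B)) B le_sup_left (sup_le hAB inf_le_right),
    relIndex_sup_left, ← inf_relIndex_right A (W ⊓ B), inf_left_comm, inf_of_le_left hAB,
    mul_comm]

theorem coverDefect_mul_coverDefect [Finite G] [A.Normal] [B.Normal] (hAB : A ≤ B)
    (hBC : B ≤ C) : coverDefect W A B * coverDefect W B C = coverDefect W A C := by
  have hr : (W ⊓ A).relIndex (W ⊓ C) ≠ 0 := index_ne_zero_of_finite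
  refine Nat.eq_of_mul_eq_mul_right (Nat.pos_of_ne_zero hr) ?_
  rw [← relIndex_eq_coverDefect_mul (hAB.trans hBC), ← relIndex_mul_relIndex A B C hAB hBC,
    relIndex_eq_coverDefect_mul (W := W) hAB, relIndex_eq_coverDefect_mul (W := W) hBC,
    ← relIndex_mul_relIndex (W ⊓ A) (W ⊓ B) (W ⊓ C) (inf_le_inf_left W hAB)
      (inf_le_inf_left W hBC)]
  ring

theorem prod_coverDefect_mul_prod_coverDefect [Finite G] {ι : Type*} (M : ι → Subgroup G)
    (S : Finset ι) [A.Normal] [B.Normal] (hAB : A ≤ B) (hBC : B ≤ C) :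
    (∏ i ∈ S, coverDefect (M i) A B) * ∏ i ∈ S, coverDefect (M i) B C =
      ∏ i ∈ S, coverDefect (M i) A C := by
  rw [← Finset.prod_mul_distrib]
  exact Finset.prod_congr rfl fun i _ => coverDefect_mul_coverDefect hAB hBC

theorem coverDefect_eq_one_of_sup_eq_top [A.Normal] (hWA : W ⊔ A = ⊤) (hAB : A ≤ B) :
    coverDefect W A B = 1 := by
  refine coverDefect_eq_one_iff.mpr fun b hb => ?_
  rw [← SetLike.mem_coe, normal_mul, mul_inf_assoc _ _ _ hAB, ← normal_mul, sup_comm, hWA]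
  exact ⟨trivial, hb⟩

end CoverDefect

section ChiefFactor

variable {A T : Subgroup G}

theorem exists_chiefFactor_between [Finite G] [A.Normal] {B : Subgroup G} (hB : B.Normal)
    (hAB : A < B) : ∃ T : Subgroup G, T.Normal ∧ A < T ∧ T ≤ B ∧
      IsMinNormal (T.map (QuotientGroup.mk' A)) := by
  have hBA : B.map (QuotientGroup.mk' A) ≠ ⊥ := by
    rw [Ne, map_eq_bot_iff, QuotientGroup.ker_mk']
    exact hAB.not_ge
  obtain ⟨X, hX, hXB⟩ := exists_isMinNormal_le (hB.map _ (QuotientGroup.mk'_surjective A)) hBA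
  have hXT : (X.comap (QuotientGroup.mk' A)).map (QuotientGroup.mk' A) = X :=
    map_comap_eq_self_of_surjective (QuotientGroup.mk'_surjective A) X
  refine ⟨X.comap (QuotientGroup.mk' A), hX.2.1.comap _, lt_of_le_of_ne ?_ fun h => hX.1 ?_, ?_,
    by rwa [hXT]⟩
  · simpa using ker_le_comap (QuotientGroup.mk' A) X
  · rw [← hXT, ← h, map_eq_bot_iff, QuotientGroup.ker_mk']
  · calc X.comap (QuotientGroup.mk' A) ≤ (B.map (QuotientGroup.mk' A)).comap _ := comap_mono hXB
      _ = B := by rw [comap_map_eq, QuotientGroup.ker_mk', sup_of_le_left hAB.le]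

theorem commutator_le_of_prime_dvd_relIndex [Finite G] {p : ℕ} (hp : p.Prime)
    (hG : IsPSolvable p G) [A.Normal] (hF : IsMinNormal (T.map (QuotientGroup.mk' A)))
    (hpT : p ∣ A.relIndex T) : ⁅T, T⁆ ≤ A := by
  have : Fact p.Prime := ⟨hp⟩
  have hcard : Nat.card (T.map (QuotientGroup.mk' A)) = A.relIndex T := by
    rw [← relIndex_ker, QuotientGroup.ker_mk']
  rcases (hG.of_surjective hp (QuotientGroup.mk'_surjective A)).isPPowOrCoprime_card hp hF with
    ⟨k, hk⟩ | hk
  · have := hF.le_centralizer (IsPGroup.of_card hk)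
    rwa [← commutator_eq_bot_iff_le_centralizer, ← map_commutator, map_eq_bot_iff,
      QuotientGroup.ker_mk'] at this
  · exact absurd (hcard ▸ hpT) hk

/-- `A (M ⊓ T)` is normalized by `M` and, as `T / A` is abelian, by `T`. -/
theorem normal_sup_inf_of_commutator_le [A.Normal] [T.Normal] {M : Subgroup G}
    (hMT : M ⊔ T = ⊤) (hAT : A ≤ T) (hTT : ⁅T, T⁆ ≤ A) : (A ⊔ (M ⊓ T)).Normal := by
  rw [← normalizer_eq_top_iff, eq_top_iff, ← hMT]
  have hM : M ≤ normalizer (M ⊓ T : Subgroup G) :=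
    (le_inf le_normalizer le_normalizer_of_normal).trans inf_normalizer_le_normalizer_inf
  refine sup_le ((le_inf le_normalizer_of_normal hM).trans
    (normalizer_inf_normalizer_le_normalizer_sup _ _)) (le_normalizer_iff.mpr fun t ht x hx => ?_)
  have : t * x * t⁻¹ * x⁻¹ ∈ A := commutator_le.mp hTT t ht x (sup_le hAT inf_le_right hx)
  simpa using mul_mem (le_sup_left (b := M ⊓ T) this) hx

theorem coverDefect_eq_one_or_inf_le [A.Normal] [T.Normal] {M : Subgroup G} (hAT : A ≤ T)
    (hF : IsMinNormal (T.map (QuotientGroup.mk' A))) (hMT : M ⊔ T = ⊤) (hTT : ⁅T, T⁆ ≤ A) :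
    coverDefect M A T = 1 ∨ M ⊓ T ≤ A := by
  have hJ := normal_sup_inf_of_commutator_le hMT hAT hTT
  rcases hF.2.2 _ (hJ.map _ (QuotientGroup.mk'_surjective A))
    (map_mono (sup_le hAT inf_le_right)) with h | h
  · rw [map_eq_bot_iff, QuotientGroup.ker_mk'] at h
    exact Or.inr (le_sup_right.trans h)
  · have := map_le_map_iff.mp h.ge
    rw [QuotientGroup.ker_mk', sup_of_le_left le_sup_left] at this
    exact Or.inl (coverDefect_eq_one_iff.mpr this)

theorem exists_conjIso_of_inf_le {M : Subgroup G} [A.Normal] (hAM : A ≤ M)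
    (hF : IsMinNormal (T.map (QuotientGroup.mk' A))) (hMT : M ⊓ T ≤ A) :
    ∃ X : Subgroup (G ⧸ M.normalCore), IsMinNormal X ∧
      ConjIso (T.map (QuotientGroup.mk' A)) X := by
  have hAC : A ≤ M.normalCore := normal_le_normalCore.mpr hAM
  set φ := QuotientGroup.map A M.normalCore (MonoidHom.id G) hAC
  have hker : T.map (QuotientGroup.mk' A) ⊓ φ.ker = ⊥ := by
    refine eq_bot_iff.mpr ?_
    rintro _ ⟨⟨t, ht, rfl⟩, hφ⟩
    have htC : ((t : G) : G ⧸ M.normalCore) = 1 := hφ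
    rw [QuotientGroup.eq_one_iff] at htC
    simpa using hMT ⟨M.normalCore_le htC, ht⟩
  have hφ : Function.Surjective φ :=
    QuotientGroup.map_surjective_of_surjective _ _ _ QuotientGroup.mk_surjective _
  exact ⟨_, hF.map hφ hker, conjIso_map_quotientMap hAC hker⟩

theorem _root_.IsCoatom.coverDefect_eq_one_or_conjIso [Finite G] {M : Subgroup G}
    (hM : IsCoatom M) (hps : ∀ p : ℕ, p.Prime → p ∣ M.index → IsPSolvable p G) [A.Normal]
    (hT : T.Normal) (hAT : A ≤ T) (hF : IsMinNormal (T.map (QuotientGroup.mk' A))) :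
    coverDefect M A T = 1 ∨ (M ⊓ T ≤ A ∧ ∃ X : Subgroup (G ⧸ M.normalCore), IsMinNormal X ∧
      ConjIso (T.map (QuotientGroup.mk' A)) X) := by
  have := hT
  by_cases hTM : T ≤ M
  · exact Or.inl (coverDefect_eq_one_of_le hTM)
  by_cases hAM : A ≤ M
  swap
  · exact Or.inl (coverDefect_eq_one_of_sup_eq_top
      (codisjoint_iff.mp (hM.not_le_iff_codisjoint.mp hAM)) hAT)
  have hMT : M ⊔ T = ⊤ := codisjoint_iff.mp (hM.not_le_iff_codisjoint.mp hTM)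
  by_cases hcop : Nat.Coprime (A.relIndex T) M.index
  · have hTM : (T : Set G) * (M : Set G) = Set.univ := by
      rw [← normal_mul, sup_comm, hMT, coe_top]
    refine Or.inl (Nat.eq_one_of_dvd_coprimes hcop coverDefect_dvd_relIndex_left ?_)
    exact relIndex_eq_index_of_mul_eq_univ hTM ▸ coverDefect_dvd_relIndex_right
  obtain ⟨p, hp, hpT, hpM⟩ := Nat.Prime.not_coprime_iff_dvd.mp hcop
  exact (coverDefect_eq_one_or_inf_le hAT hF hMT
    (commutator_le_of_prime_dvd_relIndex hp (hps p hp hpM) hF hpT)).imp_right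
    fun h => ⟨h, exists_conjIso_of_inf_le hAM hF h⟩

theorem _root_.IsCoatom.exists_isMinNormal_map_normalCore [Finite G] {M : Subgroup G}
    (hM : IsCoatom M) : ∃ R : Subgroup G, R.Normal ∧ M.normalCore < R ∧ M ⊔ R = ⊤ ∧
      IsMinNormal (R.map (QuotientGroup.mk' M.normalCore)) := by
  obtain ⟨R, hR, hCR, -, hF⟩ :=
    exists_chiefFactor_between normal_top (M.normalCore_le.trans_lt hM.lt_top)
  have := hR
  exact ⟨R, hR, hCR, codisjoint_iff.mp (hM.not_le_iff_codisjoint.mp fun h =>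
    hCR.not_ge (normal_le_normalCore.mpr h)), hF⟩

end ChiefFactor

theorem mul_eq_univ_of_le_sup_inf {M C R W : Subgroup G} [C.Normal] [R.Normal] (hCM : C ≤ M)
    (hMR : M ⊔ R = ⊤) (hR : R ≤ C ⊔ (W ⊓ R)) : (W : Set G) * (M : Set G) = Set.univ := by
  refine Set.eq_univ_of_forall fun g => ?_
  have hg : g ∈ (R : Set G) * (M : Set G) := by
    rw [← normal_mul, sup_comm, hMR]
    trivial
  obtain ⟨r, hr, m, hm, rfl⟩ := hg
  have hr' : r ∈ ((W ⊓ R : Subgroup G) : Set G) * (C : Set G) := by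
    rw [← mul_normal, sup_comm]
    exact hR hr
  obtain ⟨w, hw, c, hc, rfl⟩ := hr'
  exact ⟨w, hw.1, c * m, M.mul_mem (hCM hc) hm, (mul_assoc w c m).symm⟩

section Family

variable {ι : Type*}

def PairwiseNotConjIso (M : ι → Subgroup G) : Prop :=
  ∀ i j, i ≠ j → ∀ (X : Subgroup (G ⧸ (M i).normalCore)) (Y : Subgroup (G ⧸ (M j).normalCore)),
    IsMinNormal X → IsMinNormal Y → ¬ ConjIso X Y

variable [Finite G] {M : ι → Subgroup G} {S : Finset ι} {W : Subgroup G}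

theorem prod_coverDefect_dvd_of_isMinNormal (hM : ∀ i, IsCoatom (M i))
    (hps : ∀ i, ∀ p : ℕ, p.Prime → p ∣ (M i).index → IsPSolvable p G)
    (hMiso : PairwiseNotConjIso M) (hW : ∀ i ∈ S, W ≤ M i) {A T : Subgroup G} [A.Normal]
    (hT : T.Normal) (hAT : A ≤ T) (hF : IsMinNormal (T.map (QuotientGroup.mk' A))) :
    ∏ i ∈ S, coverDefect (M i) A T ∣ coverDefect W A T := by
  by_cases h : ∏ i ∈ S, coverDefect (M i) A T = 1
  · exact h ▸ one_dvd _
  obtain ⟨i, hi, hne⟩ := Finset.exists_ne_one_of_prod_ne_one h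
  obtain ⟨-, X, hX, hFX⟩ :=
    ((hM i).coverDefect_eq_one_or_conjIso (hps i) hT hAT hF).resolve_left hne
  have hone : ∀ j ∈ S, j ≠ i → coverDefect (M j) A T = 1 := fun j _ hji =>
    ((hM j).coverDefect_eq_one_or_conjIso (hps j) hT hAT hF).resolve_right fun ⟨_, Y, hY, hFY⟩ =>
      hMiso i j hji.symm X Y hX hY ((hFX.symm hF.2.1).trans hFY)
  rw [Finset.prod_eq_single_of_mem i hi hone]
  exact coverDefect_dvd_of_le (hW i hi)

theorem prod_coverDefect_dvd (hM : ∀ i, IsCoatom (M i))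
    (hps : ∀ i, ∀ p : ℕ, p.Prime → p ∣ (M i).index → IsPSolvable p G)
    (hMiso : PairwiseNotConjIso M) (hW : ∀ i ∈ S, W ≤ M i) {A B : Subgroup G} [hA : A.Normal]
    [hB : B.Normal] (hAB : A ≤ B) : ∏ i ∈ S, coverDefect (M i) A B ∣ coverDefect W A B := by
  revert hA hAB
  induction A using WellFoundedGT.induction with
  | ind A ih =>
    intro hA hAB
    rcases hAB.eq_or_lt with rfl | hlt
    · simp [coverDefect_self]
    obtain ⟨T, hT, hAT, hTB, hF⟩ := exists_chiefFactor_between hB hlt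
    rw [← prod_coverDefect_mul_prod_coverDefect M S hAT.le hTB,
      ← coverDefect_mul_coverDefect hAT.le hTB]
    exact mul_dvd_mul (prod_coverDefect_dvd_of_isMinNormal hM hps hMiso hW hT hAT.le hF)
      (ih T hAT hTB)

theorem coverDefect_eq_prod_of_index_eq (hM : ∀ i, IsCoatom (M i))
    (hps : ∀ i, ∀ p : ℕ, p.Prime → p ∣ (M i).index → IsPSolvable p G)
    (hMiso : PairwiseNotConjIso M) (hW : ∀ i ∈ S, W ≤ M i)
    (hidx : W.index = ∏ i ∈ S, (M i).index) {L K : Subgroup G} [L.Normal] [K.Normal]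
    (hLK : L ≤ K) : coverDefect W L K = ∏ i ∈ S, coverDefect (M i) L K := by
  have hdvd {A B : Subgroup G} [A.Normal] [B.Normal] (hAB : A ≤ B) :=
    prod_coverDefect_dvd hM hps hMiso hW hAB
  have hbot_K : ∏ i ∈ S, coverDefect (M i) ⊥ K = coverDefect W ⊥ K := by
    refine Nat.eq_of_dvd_of_dvd_of_mul_eq_mul (hdvd bot_le) (hdvd (le_top : K ≤ ⊤)) ?_
      (mul_ne_zero coverDefect_ne_zero coverDefect_ne_zero)
    rw [prod_coverDefect_mul_prod_coverDefect M S bot_le le_top,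
      coverDefect_mul_coverDefect bot_le le_top]
    simp [coverDefect_bot_top, hidx]
  refine (Nat.eq_of_dvd_of_dvd_of_mul_eq_mul (hdvd hLK) (hdvd (bot_le : ⊥ ≤ L)) ?_ ?_).symm
  · rw [mul_comm, prod_coverDefect_mul_prod_coverDefect M S bot_le hLK, hbot_K,
      ← coverDefect_mul_coverDefect bot_le hLK, mul_comm]
  · exact mul_ne_zero coverDefect_ne_zero coverDefect_ne_zero

theorem le_sup_inf_or_inf_le (hM : ∀ i, IsCoatom (M i))
    (hps : ∀ i, ∀ p : ℕ, p.Prime → p ∣ (M i).index → IsPSolvable p G)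
    (hMiso : PairwiseNotConjIso M) (hW : ∀ i ∈ S, W ≤ M i)
    (hidx : W.index = ∏ i ∈ S, (M i).index) {L K : Subgroup G} [L.Normal] (hK : K.Normal)
    (hLK : L ≤ K) (hF : IsMinNormal (K.map (QuotientGroup.mk' L))) :
    K ≤ L ⊔ (W ⊓ K) ∨ W ⊓ K ≤ L := by
  have := hK
  by_cases h : ∏ i ∈ S, coverDefect (M i) L K = 1
  · rw [← coverDefect_eq_prod_of_index_eq hM hps hMiso hW hidx hLK, coverDefect_eq_one_iff] at h
    exact Or.inl h
  obtain ⟨i, hi, hne⟩ := Finset.exists_ne_one_of_prod_ne_one h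
  obtain ⟨hMK, -⟩ := ((hM i).coverDefect_eq_one_or_conjIso (hps i) hK hLK hF).resolve_left hne
  exact Or.inr ((inf_le_inf_right K (hW i hi)).trans hMK)

theorem index_inf_eq_mul (hM : ∀ i, IsCoatom (M i))
    (hps : ∀ i, ∀ p : ℕ, p.Prime → p ∣ (M i).index → IsPSolvable p G)
    (hMiso : PairwiseNotConjIso M) (hW : ∀ i ∈ S, W ≤ M i)
    (hidx : W.index = ∏ i ∈ S, (M i).index) {k : ι} (hk : k ∉ S) :
    (M k ⊓ W).index = (M k).index * W.index := by
  obtain ⟨R, hR, hCR, hMR, hF⟩ := (hM k).exists_isMinNormal_map_normalCore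
  have := hR
  refine index_inf_eq_mul_of_mul_eq_univ (mul_eq_univ_of_le_sup_inf (M k).normalCore_le hMR ?_)
  by_contra hcov
  rw [← coverDefect_eq_one_iff, coverDefect_eq_prod_of_index_eq hM hps hMiso hW hidx hCR.le]
    at hcov
  obtain ⟨i, hi, hne⟩ := Finset.exists_ne_one_of_prod_ne_one hcov
  obtain ⟨-, X, hX, hFX⟩ :=
    ((hM i).coverDefect_eq_one_or_conjIso (hps i) hR hCR.le hF).resolve_left hne
  exact hMiso k i (fun h => hk (h ▸ hi)) _ X hF hX hFX

theorem index_finset_inf [DecidableEq ι] (hM : ∀ i, IsCoatom (M i))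
    (hps : ∀ i, ∀ p : ℕ, p.Prime → p ∣ (M i).index → IsPSolvable p G)
    (hMiso : PairwiseNotConjIso M) (S : Finset ι) :
    (S.inf M).index = ∏ i ∈ S, (M i).index := by
  induction S using Finset.induction_on with
  | empty => simp
  | insert k S hk ih =>
    rw [Finset.inf_insert, Finset.prod_insert hk,
      index_inf_eq_mul hM hps hMiso (fun i hi => Finset.inf_le hi) ih hk, ih]

end Family

end Subgroup

theorem stmt13 {G : Type*} [Group G] [Finite G] {n : ℕ}
    (U : Subgroup G) (M : Fin n → Subgroup G)
    (hU : IsRegularIntersectionOf U M) :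
    U.index = ∏ i, (M i).index ∧
    ∀ (K L : Subgroup G) (_ : K.Normal) (hLn : L.Normal), L ≤ K →
      IsMinNormal (K.map (@QuotientGroup.mk' G _ L hLn)) →
      ((K : Set G) = (L : Set G) * ((U ⊓ K : Subgroup G) : Set G) ∨ U ⊓ K ≤ L) := by
  obtain ⟨hM, hpsU, hUinf, hiso⟩ := hU
  have hUS : U = Finset.univ.inf M := by rw [hUinf, Finset.inf_univ_eq_iInf]
  have hUM : ∀ i ∈ Finset.univ, U ≤ M i := fun i hi => hUS ▸ Finset.inf_le hi
  have hps : ∀ i, ∀ p : ℕ, p.Prime → p ∣ (M i).index → IsPSolvable p G := fun i p hp hpM =>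
    hpsU p hp (hpM.trans (Subgroup.index_dvd_of_le (hUM i (Finset.mem_univ i))))
  have hMiso : Subgroup.PairwiseNotConjIso M := fun i j hij X Y hX hY =>
    (hiso i j hij X Y hX hY).1
  have hidx : U.index = ∏ i, (M i).index :=
    hUS ▸ Subgroup.index_finset_inf hM hps hMiso Finset.univ
  refine ⟨hidx, fun K L hK hL hLK hF => ?_⟩
  rcases Subgroup.le_sup_inf_or_inf_le hM hps hMiso hUM hidx hK hLK hF with h | h
  · left
    rw [← Subgroup.normal_mul, le_antisymm (sup_le hLK inf_le_right) h]
  · exact Or.inr h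
end
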